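/- arXiv:1304.6897 — 6 statements merged into one kernel-verified Lean document; each statement's English description precedes it below -/
import Mathlib

section
/- Let T be a binary search tree on keys {1,…,n} and define weights w_k = 4^{−d_T(k)} for each key k. Then for all i, j ∈ {1,…,n}: r(T,i,j) ≤ log₂( (∑_{k=min(i,j)}^{max(i,j)} w_k) / min(w_i, w_j) ). -/
open Finset

/-- A rooted binary tree with natural-number labels at internal nodes. -/
inductive BT : Type
  | leaf : BT
  | node : BT → ℕ → BT → BT

namespace BT

/-- Inorder traversal of the labels. -/
def inorder : BT → List ℕ
  | .leaf => []
  | .node l x r => inorder l ++ x :: inorder r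

/-- `T` is a binary search tree on keys `{1, …, n}`: a rooted binary tree with
exactly `n` nodes labeled bijectively with `1, …, n` whose inorder traversal is
increasing, i.e. the inorder traversal is exactly `1, 2, …, n`. -/
def IsBST (n : ℕ) (T : BT) : Prop :=
  T.inorder = List.range' 1 n

/-- Label of the root. -/
def rootLabel : BT → ℕ
  | .leaf => 0
  | .node _ x _ => x

/-- `d_T(k)`: depth of the node labeled `k` (the root has depth 0),
located by binary search. -/
def depth : BT → ℕ → ℕ
  | .leaf, _ => 0
  | .node l x r, k => if k = x then 0 else if k < x then depth l k + 1 else depth r k + 1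

/-- `LCA_T(i,j)`: label of the lowest common ancestor of the nodes labeled `i` and `j`. -/
def lca : BT → ℕ → ℕ → ℕ
  | .leaf, _, _ => 0
  | .node l x r, i, j =>
    if i < x ∧ j < x then lca l i j
    else if x < i ∧ x < j then lca r i j
    else x

/-- `r(T,i,j) = d_T(i) + d_T(j) - 2 d_T(LCA_T(i,j))`:
the number of edges on the path from `i` to `j`. -/
def cost (T : BT) (i j : ℕ) : ℤ :=
  (T.depth i : ℤ) + (T.depth j : ℤ) - 2 * (T.depth (T.lca i j) : ℤ)

/-- The subtree rooted at the node labeled `v` (located by binary search). -/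
def subtreeAt : BT → ℕ → BT
  | .leaf, _ => .leaf
  | .node l x r, v =>
    if v = x then .node l x r else if v < x then subtreeAt l v else subtreeAt r v

end BT

/-- Lazy finger runtime `R_ℓ(T,X) = ∑_{i=1}^m r(T, x_{i-1}, x_i)`. -/
def Rlazy (T : BT) (x : ℕ → ℕ) (m : ℕ) : ℤ :=
  ∑ i ∈ Finset.Icc 1 m, T.cost (x (i - 1)) (x i)

/-- Root finger runtime `R_r(T,X) = ∑_{i=1}^m d_T(x_i)`. -/
def Rroot (T : BT) (x : ℕ → ℕ) (m : ℕ) : ℤ :=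
  ∑ i ∈ Finset.Icc 1 m, (T.depth (x i) : ℤ)

/-- Weighted dynamic finger cost
`DF(W,X) = ∑_{i=1}^m log₂( (∑_{k=min(x_{i-1},x_i)}^{max(x_{i-1},x_i)} w_k) / min(w_{x_{i-1}}, w_{x_i}) )`. -/
noncomputable def DF (w : ℕ → ℝ) (x : ℕ → ℕ) (m : ℕ) : ℝ :=
  ∑ i ∈ Finset.Icc 1 m,
    Real.logb 2
      ((∑ k ∈ Finset.Icc (min (x (i - 1)) (x i)) (max (x (i - 1)) (x i)), w k) /
        min (w (x (i - 1))) (w (x i)))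

lemma lca_bound : ∀ (T : BT), T.inorder.Pairwise (· < ·) →
    ∀ i j : ℕ, i ∈ T.inorder → j ∈ T.inorder →
    min i j ≤ T.lca i j ∧ T.lca i j ≤ max i j := by
  intro T
  induction T with
  | leaf => intro _ i j hi _; simp [BT.inorder] at hi
  | node l x r ihl ihr =>
    intro hs i j hi hj
    simp only [BT.inorder, List.mem_append, List.mem_cons] at hi hj
    rw [BT.inorder] at hs
    obtain ⟨hsl, hsr', hcross⟩ := List.pairwise_append.mp hs
    obtain ⟨hxr, hsr⟩ := List.pairwise_cons.mp hsr'
    by_cases hc1 : i < x ∧ j < x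
    · have hi' : i ∈ l.inorder := by
        rcases hi with h | h | h
        · exact h
        · omega
        · exact absurd (hxr i h) (by omega)
      have hj' : j ∈ l.inorder := by
        rcases hj with h | h | h
        · exact h
        · omega
        · exact absurd (hxr j h) (by omega)
      rw [BT.lca, if_pos hc1]
      exact ihl hsl i j hi' hj'
    · by_cases hc2 : x < i ∧ x < j
      · have hi' : i ∈ r.inorder := by
          rcases hi with h | h | h
          · exact absurd (hcross i h x (by simp)) (by omega)
          · omega
          · exact h
        have hj' : j ∈ r.inorder := by
          rcases hj with h | h | h
          · exact absurd (hcross j h x (by simp)) (by omega)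
          · omega
          · exact h
        rw [BT.lca, if_neg hc1, if_pos hc2]
        exact ihr hsr i j hi' hj'
      · rw [BT.lca, if_neg hc1, if_neg hc2]
        omega

lemma quarter_pow (k : ℕ) : ((1:ℝ)/4) ^ k = (2:ℝ) ^ (-(2*(k:ℤ))) := by
  have h : (-(2*(k:ℤ))) = -((2*k : ℕ) : ℤ) := by push_cast; ring
  rw [h, zpow_neg, zpow_natCast, pow_mul, one_div, inv_pow]
  norm_num

/-- For a BST `T` on `{1,…,n}` with weights `w_k = 4^{−d_T(k)}`,
for all keys `i, j`:
`r(T,i,j) ≤ log₂( (∑_{k=min(i,j)}^{max(i,j)} w_k) / min(w_i, w_j) )`. -/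
theorem stmt4 (n : ℕ) (T : BT) (hT : BT.IsBST n T) (i j : ℕ)
    (hi : i ∈ Finset.Icc 1 n) (hj : j ∈ Finset.Icc 1 n) :
    (T.cost i j : ℝ) ≤
      Real.logb 2
        ((∑ k ∈ Finset.Icc (min i j) (max i j), ((1 : ℝ) / 4) ^ T.depth k) /
          min (((1 : ℝ) / 4) ^ T.depth i) (((1 : ℝ) / 4) ^ T.depth j)) := by
  have h2pos : (0:ℝ) < 2 := by norm_num
  simp only [Finset.mem_Icc] at hi hj
  have hmemi : i ∈ T.inorder := by
    rw [hT, List.mem_range'_1]; omega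
  have hmemj : j ∈ T.inorder := by
    rw [hT, List.mem_range'_1]; omega
  have hsorted : T.inorder.Pairwise (· < ·) := by
    rw [hT]; exact List.pairwise_lt_range' (s := 1) (n := n)
  obtain ⟨hl1, hl2⟩ := lca_bound T hsorted i j hmemi hmemj
  set ℓ := T.lca i j with hℓ
  set a := T.depth i with ha
  set b := T.depth j with hb
  set c := T.depth ℓ with hc
  set M := max a b with hM
  set S := ∑ k ∈ Finset.Icc (min i j) (max i j), ((1 : ℝ) / 4) ^ T.depth k with hS
  have hSge : ((1:ℝ)/4) ^ c ≤ S := by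
    apply Finset.single_le_sum (f := fun k => ((1:ℝ)/4) ^ T.depth k)
    · intro k _; positivity
    · rw [Finset.mem_Icc]; exact ⟨hl1, hl2⟩
  have hmin : min (((1:ℝ)/4) ^ a) (((1:ℝ)/4) ^ b) = ((1:ℝ)/4) ^ M := by
    rcases le_total a b with h | h
    · rw [min_eq_right (pow_le_pow_of_le_one (by norm_num) (by norm_num) h),
        hM, max_eq_right h]
    · rw [min_eq_left (pow_le_pow_of_le_one (by norm_num) (by norm_num) h),
        hM, max_eq_left h]
  rw [hmin]
  have harg : (2:ℝ) ^ (2*(M:ℤ) - 2*(c:ℤ)) ≤ S / ((1:ℝ)/4) ^ M := by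
    rw [le_div_iff₀ (by positivity), quarter_pow M, ← zpow_add₀ (by norm_num : (2:ℝ) ≠ 0)]
    have : (2*(M:ℤ) - 2*(c:ℤ)) + (-(2*(M:ℤ))) = -(2*(c:ℤ)) := by ring
    rw [this, ← quarter_pow c]
    exact hSge
  have hcost : T.cost i j ≤ 2*(M:ℤ) - 2*(c:ℤ) := by
    rw [BT.cost, ← hℓ, ← ha, ← hb, ← hc, hM]
    omega
  calc (T.cost i j : ℝ) ≤ ((2*(M:ℤ) - 2*(c:ℤ) : ℤ) : ℝ) := by exact_mod_cast hcost
    _ = Real.logb 2 ((2:ℝ) ^ (2*(M:ℤ) - 2*(c:ℤ))) := by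
        rw [← Real.rpow_intCast, Real.logb_rpow (by norm_num) (by norm_num)]
    _ ≤ Real.logb 2 (S / ((1:ℝ)/4) ^ M) :=
        Real.logb_le_logb_of_le (by norm_num) (by positivity) harg
end

section
/- Let T be a binary search tree on keys {1,…,n} and define weights w_k = 4^{−d_T(k)} for each key k. Then for all i, j ∈ {1,…,n}: log₂( (∑_{k=min(i,j)}^{max(i,j)} w_k) / min(w_i, w_j) ) ≤ 2·r(T,i,j) + 1. -/
open Finset

lemma node_range' {l r : BT} {x a m : ℕ}
    (h : (BT.node l x r).inorder = List.range' a m) :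
    ∃ ml mr, m = ml + 1 + mr ∧ l.inorder = List.range' a ml ∧ x = a + ml ∧
      r.inorder = List.range' (a + ml + 1) mr := by
  have hlen : m = l.inorder.length + 1 + r.inorder.length := by
    have := congrArg List.length h
    simp [BT.inorder] at this
    omega
  have hsplit := (@List.range'_append a l.inorder.length (1 + r.inorder.length) 1).symm
  simp only [one_mul] at hsplit
  have hm : m = l.inorder.length + (1 + r.inorder.length) := by omega
  rw [hm, hsplit, BT.inorder] at h
  have h2 := List.append_inj h (by simp)
  obtain ⟨h3, h4⟩ := h2
  rw [show 1 + r.inorder.length = r.inorder.length + 1 by omega, List.range'_succ] at h4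
  simp only [List.cons.injEq] at h4
  obtain ⟨hx, hr⟩ := h4
  exact ⟨l.inorder.length, r.inorder.length, by omega, h3, hx, by simpa using hr⟩

lemma sum_depth_le (T : BT) : ∀ a m : ℕ, T.inorder = List.range' a m →
    ∑ k ∈ Finset.Ico a (a+m), ((1:ℝ)/4)^(T.depth k) ≤ 2 := by
  induction T with
  | leaf =>
    intro a m h
    have hm : m = 0 := by
      have := congrArg List.length h
      simpa [BT.inorder] using this.symm
    subst hm
    simp
  | node l x r ihl ihr =>
    intro a m h
    obtain ⟨ml, mr, hm, hl, hx, hr⟩ := node_range' h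
    subst hx
    have hIl := ihl a ml hl
    have hIr := ihr (a+ml+1) mr hr
    have hsplit : Finset.Ico a (a+m) = Finset.Ico a (a+ml) ∪ Finset.Ico (a+ml) (a+m) := by
      rw [Finset.Ico_union_Ico_eq_Ico] <;> omega
    have hsplit2 : Finset.Ico (a+ml) (a+m) = insert (a+ml) (Finset.Ico (a+ml+1) (a+m)) := by
      ext k; simp [Finset.mem_Ico]; omega
    rw [hsplit, Finset.sum_union (by
      simp [Finset.disjoint_left]; omega), hsplit2, Finset.sum_insert (by simp)]
    have e1 : ∑ k ∈ Finset.Ico a (a+ml), ((1:ℝ)/4)^((BT.node l (a+ml) r).depth k)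
        = (1/4) * ∑ k ∈ Finset.Ico a (a+ml), ((1:ℝ)/4)^(l.depth k) := by
      rw [Finset.mul_sum]
      refine Finset.sum_congr rfl fun k hk => ?_
      simp only [Finset.mem_Ico] at hk
      rw [BT.depth, if_neg (by omega), if_pos (by omega)]
      ring
    have e2 : ∑ k ∈ Finset.Ico (a+ml+1) (a+m), ((1:ℝ)/4)^((BT.node l (a+ml) r).depth k)
        = (1/4) * ∑ k ∈ Finset.Ico (a+ml+1) (a+ml+1+mr), ((1:ℝ)/4)^(r.depth k) := by
      rw [show a + m = a+ml+1+mr by omega, Finset.mul_sum]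
      refine Finset.sum_congr rfl fun k hk => ?_
      simp only [Finset.mem_Ico] at hk
      rw [BT.depth, if_neg (by omega), if_neg (by omega)]
      ring
    have e3 : ((1:ℝ)/4)^((BT.node l (a+ml) r).depth (a+ml)) = 1 := by
      rw [BT.depth, if_pos (by omega)]
      norm_num
    rw [e1, e2, e3]
    linarith

lemma lca_bound_s6 (T : BT) : ∀ a m i j : ℕ, T.inorder = List.range' a m →
    a ≤ i → i < a + m → a ≤ j → j < a + m →
    (a ≤ T.lca i j ∧ T.lca i j < a + m) ∧
    T.depth (T.lca i j) ≤ T.depth i ∧ T.depth (T.lca i j) ≤ T.depth j ∧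
    ∑ k ∈ Finset.Icc (min i j) (max i j), ((1:ℝ)/4)^(T.depth k)
      ≤ 2 * ((1:ℝ)/4)^(T.depth (T.lca i j)) := by
  induction T with
  | leaf =>
    intro a m i j h hi1 hi2 hj1 hj2
    have hm : m = 0 := by
      have := congrArg List.length h
      simpa [BT.inorder] using this.symm
    omega
  | node l x r ihl ihr =>
    intro a m i j h hi1 hi2 hj1 hj2
    obtain ⟨ml, mr, hm, hl, hx, hr⟩ := node_range' h
    subst hx
    by_cases h1 : i < a + ml ∧ j < a + ml
    · -- both in left subtree
      have hlca : (BT.node l (a+ml) r).lca i j = l.lca i j := by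
        rw [BT.lca, if_pos h1]
      obtain ⟨⟨hc1, hc2⟩, hd1, hd2, hs⟩ := ihl a ml i j hl hi1 h1.1 hj1 h1.2
      have dep : ∀ k, k < a + ml → (BT.node l (a+ml) r).depth k = l.depth k + 1 := by
        intro k hk
        rw [BT.depth, if_neg (by omega), if_pos (by omega)]
      rw [hlca, dep _ hc2, dep _ h1.1, dep _ h1.2]
      refine ⟨⟨hc1, by omega⟩, by omega, by omega, ?_⟩
      have e : ∑ k ∈ Finset.Icc (min i j) (max i j), ((1:ℝ)/4)^((BT.node l (a+ml) r).depth k)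
          = (1/4) * ∑ k ∈ Finset.Icc (min i j) (max i j), ((1:ℝ)/4)^(l.depth k) := by
        rw [Finset.mul_sum]
        refine Finset.sum_congr rfl fun k hk => ?_
        simp only [Finset.mem_Icc] at hk
        rw [dep k (by omega)]
        ring
      rw [e, pow_succ]
      linarith
    · by_cases h2 : a + ml < i ∧ a + ml < j
      · -- both in right subtree
        have hlca : (BT.node l (a+ml) r).lca i j = r.lca i j := by
          rw [BT.lca, if_neg h1, if_pos h2]
        obtain ⟨⟨hc1, hc2⟩, hd1, hd2, hs⟩ :=
          ihr (a+ml+1) mr i j hr (by omega) (by omega) (by omega) (by omega)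
        have dep : ∀ k, a + ml < k → (BT.node l (a+ml) r).depth k = r.depth k + 1 := by
          intro k hk
          rw [BT.depth, if_neg (by omega), if_neg (by omega)]
        rw [hlca, dep _ hc1, dep _ h2.1, dep _ h2.2]
        refine ⟨⟨by omega, by omega⟩, by omega, by omega, ?_⟩
        have e : ∑ k ∈ Finset.Icc (min i j) (max i j), ((1:ℝ)/4)^((BT.node l (a+ml) r).depth k)
            = (1/4) * ∑ k ∈ Finset.Icc (min i j) (max i j), ((1:ℝ)/4)^(r.depth k) := by
          rw [Finset.mul_sum]
          refine Finset.sum_congr rfl fun k hk => ?_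
          simp only [Finset.mem_Icc] at hk
          rw [dep k (by omega)]
          ring
        rw [e, pow_succ]
        linarith
      · -- root is the lca
        have hlca : (BT.node l (a+ml) r).lca i j = a + ml := by
          rw [BT.lca, if_neg h1, if_neg h2]
        have hd0 : (BT.node l (a+ml) r).depth (a+ml) = 0 := by
          rw [BT.depth, if_pos rfl]
        rw [hlca, hd0]
        refine ⟨⟨by omega, by omega⟩, by omega, by omega, ?_⟩
        simp only [pow_zero, mul_one]
        calc ∑ k ∈ Finset.Icc (min i j) (max i j), ((1:ℝ)/4)^((BT.node l (a+ml) r).depth k)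
            ≤ ∑ k ∈ Finset.Ico a (a+m), ((1:ℝ)/4)^((BT.node l (a+ml) r).depth k) := by
              refine Finset.sum_le_sum_of_subset_of_nonneg ?_ (fun k _ _ => by positivity)
              intro k hk
              simp only [Finset.mem_Icc, Finset.mem_Ico] at *
              omega
          _ ≤ 2 := sum_depth_le _ a m h

/-- For a BST `T` on `{1,…,n}` with weights `w_k = 4^{−d_T(k)}`,
for all keys `i, j`:
`log₂( (∑_{k=min(i,j)}^{max(i,j)} w_k) / min(w_i, w_j) ) ≤ 2·r(T,i,j) + 1`. -/
theorem stmt6 (n : ℕ) (T : BT) (hT : BT.IsBST n T) (i j : ℕ)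
    (hi : i ∈ Finset.Icc 1 n) (hj : j ∈ Finset.Icc 1 n) :
    Real.logb 2
        ((∑ k ∈ Finset.Icc (min i j) (max i j), ((1 : ℝ) / 4) ^ T.depth k) /
          min (((1 : ℝ) / 4) ^ T.depth i) (((1 : ℝ) / 4) ^ T.depth j)) ≤
      2 * (T.cost i j : ℝ) + 1 := by
  rw [Finset.mem_Icc] at hi hj
  obtain ⟨⟨hc1, hc2⟩, hdi, hdj, hsum⟩ :=
    lca_bound_s6 T 1 n i j hT hi.1 (by omega) hj.1 (by omega)
  set c := T.lca i j with hc
  set di := T.depth i with hdi'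
  set dj := T.depth j with hdj'
  set dc := T.depth c with hdc'
  set M := max di dj with hM
  set S := ∑ k ∈ Finset.Icc (min i j) (max i j), ((1:ℝ)/4)^(T.depth k) with hS
  have hmin : min (((1:ℝ)/4)^di) (((1:ℝ)/4)^dj) = ((1:ℝ)/4)^M := by
    rw [hM]
    rcases le_total di dj with h | h
    · rw [max_eq_right h, min_eq_right (pow_le_pow_of_le_one (by norm_num) (by norm_num) h)]
    · rw [max_eq_left h, min_eq_left (pow_le_pow_of_le_one (by norm_num) (by norm_num) h)]
  have hSpos : 0 < S := by
    refine Finset.sum_pos (fun k _ => by positivity) ?_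
    exact ⟨i, by simp [Finset.mem_Icc, min_le_left, le_max_left]⟩
  set t := M - dc with ht
  have hdcM : dc ≤ M := le_trans hdi (le_max_left _ _)
  have h24 : (2:ℝ)^(2*t+1) * ((1:ℝ)/4)^t = 2 := by
    calc (2:ℝ)^(2*t+1) * ((1:ℝ)/4)^t
        = 2 * (((2:ℝ)^2 * ((1:ℝ)/4))^t) := by rw [pow_succ, pow_mul, mul_pow]; ring
      _ = 2 := by norm_num
  have hpow : (2:ℝ)^(2*t+1) * ((1:ℝ)/4)^M = 2 * ((1:ℝ)/4)^dc := by
    have hM' : M = dc + t := by omega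
    rw [hM', pow_add ((1:ℝ)/4) dc t]
    calc (2:ℝ)^(2*t+1) * (((1:ℝ)/4)^dc * ((1:ℝ)/4)^t)
        = ((2:ℝ)^(2*t+1) * ((1:ℝ)/4)^t) * ((1:ℝ)/4)^dc := by ring
      _ = 2 * ((1:ℝ)/4)^dc := by rw [h24]
  have hkey : S / ((1:ℝ)/4)^M ≤ (2:ℝ)^(2*t+1) := by
    rw [div_le_iff₀ (by positivity), hpow]
    exact hsum
  rw [hmin]
  calc Real.logb 2 (S / ((1:ℝ)/4)^M)
      ≤ Real.logb 2 ((2:ℝ)^(2*t+1)) := by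
        rw [Real.logb_le_logb (by norm_num) (by positivity) (by positivity)]
        exact hkey
    _ = ((2*t+1 : ℕ) : ℝ) := by
        rw [Real.logb_pow, Real.logb_self_eq_one (by norm_num)]
        push_cast; ring
    _ ≤ 2 * (T.cost i j : ℝ) + 1 := by
        have hZ : ((2*t+1 : ℕ) : ℤ) ≤ 2 * T.cost i j + 1 := by
          unfold BT.cost
          rw [← hdi', ← hdj', ← hc, ← hdc']
          rcases max_choice di dj with h | h <;> omega
        calc ((2*t+1 : ℕ) : ℝ) = (((2*t+1 : ℕ) : ℤ) : ℝ) := by push_cast; ring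
          _ ≤ ((2 * T.cost i j + 1 : ℤ) : ℝ) := by exact_mod_cast hZ
          _ = 2 * (T.cost i j : ℝ) + 1 := by push_cast; ring
end

section
/- Let T be a binary search tree on keys {1,…,n}, let X = x_1,…,x_m be a search sequence with each x_i ∈ {1,…,n}, and let x_0 denote the root label of T. Then there exists an assignment of positive real weights w_1,…,w_n (namely w_k = 4^{−d_T(k)}) such that DF(W,X) ≤ 2·R_ℓ(T,X) + m. In particular, the infimum of DF(W,X) over all positive weight assignments W is at most 2·R_ℓ(T,X) + m. -/
open Finset

namespace Stmt7Aux

/-- Splitting an inorder traversal that is a range. -/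
lemma inorder_split {l r : BT} {x a len : ℕ}
    (h : (BT.node l x r).inorder = List.range' a len) :
    l.inorder = List.range' a (x - a) ∧
      r.inorder = List.range' (x + 1) (a + len - (x + 1)) ∧
      a ≤ x ∧ x < a + len ∧ x = a + l.inorder.length := by
  simp only [BT.inorder] at h
  set L := l.inorder.length with hL
  set R := r.inorder.length with hR
  have hlen : L + (R + 1) = len := by
    have := congrArg List.length h
    simp [List.length_append, List.length_range', ← hL, ← hR] at this
    omega
  have hsplit : List.range' a len = List.range' a L ++ List.range' (a + L) (R + 1) := by
    have := (@List.range'_append a L (R+1) 1).symm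
    simp only [Nat.one_mul] at this
    rw [← this]
    congr 1
    omega
  rw [hsplit] at h
  have hinj := List.append_inj h (by simp [List.length_range', hL])
  obtain ⟨h1, h2⟩ := hinj
  rw [List.range'_succ] at h2
  have hx : x = a + L := by simpa using congrArg (fun t => t.headI) h2
  have h2' : r.inorder = List.range' (a + L + 1) R := by
    simpa using congrArg List.tail h2
  refine ⟨?_, ?_, ?_, ?_, hx⟩
  · rw [h1]; congr 1; omega
  · rw [h2']; congr 1 <;> omega
  · omega
  · omega

/-- Total weight of a BST-shaped tree is at most 2. -/
lemma sum_pow_le (T : BT) : ∀ a len, T.inorder = List.range' a len →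
    ∑ k ∈ Finset.Ico a (a + len), ((1 : ℝ) / 4) ^ T.depth k ≤ 2 := by
  induction T with
  | leaf =>
    intro a len h
    have : len = 0 := by simpa [BT.inorder] using (congrArg List.length h).symm
    simp [this]
  | node l x r ihl ihr =>
    intro a len h
    obtain ⟨hl, hr, hax, hxlen, -⟩ := inorder_split h
    have hIl := ihl a (x - a) hl
    have hIr := ihr (x + 1) (a + len - (x + 1)) hr
    have e1 : a + (x - a) = x := by omega
    have e2 : x + 1 + (a + len - (x + 1)) = a + len := by omega
    rw [e1] at hIl; rw [e2] at hIr
    have hsplit : ∑ k ∈ Finset.Ico a (a + len), ((1:ℝ)/4) ^ (BT.node l x r).depth k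
        = (∑ k ∈ Finset.Ico a x, ((1:ℝ)/4) ^ (BT.node l x r).depth k)
          + (((1:ℝ)/4) ^ (BT.node l x r).depth x
          + ∑ k ∈ Finset.Ico (x+1) (a + len), ((1:ℝ)/4) ^ (BT.node l x r).depth k) := by
      rw [← Finset.sum_Ico_consecutive _ hax (le_of_lt hxlen),
        Finset.sum_eq_sum_Ico_succ_bot hxlen]
    rw [hsplit]
    have hleft : ∑ k ∈ Finset.Ico a x, ((1:ℝ)/4) ^ (BT.node l x r).depth k
        = (1/4) * ∑ k ∈ Finset.Ico a x, ((1:ℝ)/4) ^ l.depth k := by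
      rw [Finset.mul_sum]
      refine Finset.sum_congr rfl fun k hk => ?_
      have hk' := Finset.mem_Ico.mp hk
      have : (BT.node l x r).depth k = l.depth k + 1 := by
        simp [BT.depth, hk'.2, Nat.ne_of_lt hk'.2]
      rw [this, pow_succ]; ring
    have hright : ∑ k ∈ Finset.Ico (x+1) (a+len), ((1:ℝ)/4) ^ (BT.node l x r).depth k
        = (1/4) * ∑ k ∈ Finset.Ico (x+1) (a+len), ((1:ℝ)/4) ^ r.depth k := by
      rw [Finset.mul_sum]
      refine Finset.sum_congr rfl fun k hk => ?_
      have hk' := Finset.mem_Ico.mp hk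
      have hkx : x < k := by omega
      have : (BT.node l x r).depth k = r.depth k + 1 := by
        simp [BT.depth, Nat.ne_of_gt hkx, not_lt.mpr (le_of_lt hkx)]
      rw [this, pow_succ]; ring
    have hx0 : (BT.node l x r).depth x = 0 := by simp [BT.depth]
    rw [hleft, hright, hx0]
    nlinarith [hIl, hIr]

/-- Main lemma: lca bounds and local sum bound. -/
lemma main (T : BT) : ∀ a len, T.inorder = List.range' a len →
    ∀ i j, a ≤ i → i < a + len → a ≤ j → j < a + len →
    (min i j ≤ T.lca i j ∧ T.lca i j ≤ max i j) ∧
      T.depth (T.lca i j) ≤ T.depth i ∧ T.depth (T.lca i j) ≤ T.depth j ∧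
      ∑ k ∈ Finset.Icc (min i j) (max i j), ((1:ℝ)/4) ^ T.depth k
        ≤ 2 * ((1:ℝ)/4) ^ T.depth (T.lca i j) := by
  induction T with
  | leaf =>
    intro a len h i j hi1 hi2 _ _
    have : len = 0 := by simpa [BT.inorder] using (congrArg List.length h).symm
    omega
  | node l x r ihl ihr =>
    intro a len h i j hi1 hi2 hj1 hj2
    obtain ⟨hl, hr, hax, hxlen, -⟩ := inorder_split h
    have e1 : a + (x - a) = x := by omega
    have e2 : x + 1 + (a + len - (x + 1)) = a + len := by omega
    by_cases h1 : i < x ∧ j < x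
    · -- left subtree
      have hIH := ihl a (x - a) hl i j hi1 (by omega) hj1 (by omega)
      have hlca : (BT.node l x r).lca i j = l.lca i j := by simp [BT.lca, h1]
      obtain ⟨⟨hm1, hm2⟩, hd1, hd2, hsum⟩ := hIH
      have hlx : l.lca i j < x := lt_of_le_of_lt hm2 (by omega)
      have hdl : (BT.node l x r).depth (l.lca i j) = l.depth (l.lca i j) + 1 := by
        simp [BT.depth, hlx, Nat.ne_of_lt hlx]
      have hdi : (BT.node l x r).depth i = l.depth i + 1 := by
        simp [BT.depth, h1.1, Nat.ne_of_lt h1.1]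
      have hdj : (BT.node l x r).depth j = l.depth j + 1 := by
        simp [BT.depth, h1.2, Nat.ne_of_lt h1.2]
      rw [hlca, hdl, hdi, hdj]
      refine ⟨⟨hm1, hm2⟩, by omega, by omega, ?_⟩
      have hcong : ∑ k ∈ Finset.Icc (min i j) (max i j), ((1:ℝ)/4) ^ (BT.node l x r).depth k
          = (1/4) * ∑ k ∈ Finset.Icc (min i j) (max i j), ((1:ℝ)/4) ^ l.depth k := by
        rw [Finset.mul_sum]
        refine Finset.sum_congr rfl fun k hk => ?_
        have hk' := Finset.mem_Icc.mp hk
        have hkx : k < x := by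
          rcases le_total i j with hij | hij <;> simp [max_eq_right, max_eq_left, hij] at hk' <;> omega
        have : (BT.node l x r).depth k = l.depth k + 1 := by
          simp [BT.depth, hkx, Nat.ne_of_lt hkx]
        rw [this, pow_succ]; ring
      rw [hcong, pow_succ]
      nlinarith [hsum]
    · by_cases h2 : x < i ∧ x < j
      · -- right subtree
        have hIH := ihr (x+1) (a + len - (x+1)) hr i j (by omega) (by omega) (by omega) (by omega)
        have hlca : (BT.node l x r).lca i j = r.lca i j := by simp [BT.lca, h1, h2]
        obtain ⟨⟨hm1, hm2⟩, hd1, hd2, hsum⟩ := hIH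
        have hlx : x < r.lca i j := lt_of_lt_of_le (by omega : x < min i j) hm1
        have hdl : (BT.node l x r).depth (r.lca i j) = r.depth (r.lca i j) + 1 := by
          simp [BT.depth, Nat.ne_of_gt hlx, not_lt.mpr (le_of_lt hlx)]
        have hdi : (BT.node l x r).depth i = r.depth i + 1 := by
          simp [BT.depth, Nat.ne_of_gt h2.1, not_lt.mpr (le_of_lt h2.1)]
        have hdj : (BT.node l x r).depth j = r.depth j + 1 := by
          simp [BT.depth, Nat.ne_of_gt h2.2, not_lt.mpr (le_of_lt h2.2)]
        rw [hlca, hdl, hdi, hdj]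
        refine ⟨⟨hm1, hm2⟩, by omega, by omega, ?_⟩
        have hcong : ∑ k ∈ Finset.Icc (min i j) (max i j), ((1:ℝ)/4) ^ (BT.node l x r).depth k
            = (1/4) * ∑ k ∈ Finset.Icc (min i j) (max i j), ((1:ℝ)/4) ^ r.depth k := by
          rw [Finset.mul_sum]
          refine Finset.sum_congr rfl fun k hk => ?_
          have hk' := Finset.mem_Icc.mp hk
          have hkx : x < k := by
            have : x < min i j := by omega
            omega
          have : (BT.node l x r).depth k = r.depth k + 1 := by
            simp [BT.depth, Nat.ne_of_gt hkx, not_lt.mpr (le_of_lt hkx)]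
          rw [this, pow_succ]; ring
        rw [hcong, pow_succ]
        nlinarith [hsum]
      · -- lca is x
        have hlca : (BT.node l x r).lca i j = x := by simp [BT.lca, h1, h2]
        have hx0 : (BT.node l x r).depth x = 0 := by simp [BT.depth]
        rw [hlca, hx0]
        refine ⟨⟨by omega, by omega⟩, by omega, by omega, ?_⟩
        have hsub : Finset.Icc (min i j) (max i j) ⊆ Finset.Ico a (a + len) := by
          intro k hk
          have hk' := Finset.mem_Icc.mp hk
          exact Finset.mem_Ico.mpr ⟨by omega, by omega⟩
        calc ∑ k ∈ Finset.Icc (min i j) (max i j), ((1:ℝ)/4) ^ (BT.node l x r).depth k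
            ≤ ∑ k ∈ Finset.Ico a (a+len), ((1:ℝ)/4) ^ (BT.node l x r).depth k :=
              Finset.sum_le_sum_of_subset_of_nonneg hsub (fun k _ _ => by positivity)
          _ ≤ 2 := sum_pow_le _ a len h
          _ = 2 * ((1:ℝ)/4) ^ (0:ℕ) := by norm_num


lemma min_pow (di dj : ℕ) :
    min (((1:ℝ)/4) ^ di) (((1:ℝ)/4) ^ dj) = ((1:ℝ)/4) ^ (max di dj) := by
  rcases le_total di dj with h | h
  · rw [max_eq_right h, min_eq_right (pow_le_pow_of_le_one (by norm_num) (by norm_num) h)]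
  · rw [max_eq_left h, min_eq_left (pow_le_pow_of_le_one (by norm_num) (by norm_num) h)]

lemma step (n : ℕ) (T : BT) (hT : T.inorder = List.range' 1 n)
    (i j : ℕ) (hi1 : 1 ≤ i) (hi2 : i ≤ n) (hj1 : 1 ≤ j) (hj2 : j ≤ n) :
    Real.logb 2 ((∑ k ∈ Finset.Icc (min i j) (max i j), ((1:ℝ)/4) ^ T.depth k) /
        min (((1:ℝ)/4) ^ T.depth i) (((1:ℝ)/4) ^ T.depth j))
      ≤ 2 * (T.cost i j : ℝ) + 1 := by
  obtain ⟨⟨hm1, hm2⟩, hd1, hd2, hsum⟩ :=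
    main T 1 n hT i j hi1 (by omega) hj1 (by omega)
  set dl := T.depth (T.lca i j) with hdl
  set di := T.depth i with hdi
  set dj := T.depth j with hdj
  set D := max di dj with hD
  set e := D - dl with he
  have hdlD : dl ≤ D := le_trans hd1 (le_max_left _ _)
  set S := ∑ k ∈ Finset.Icc (min i j) (max i j), ((1:ℝ)/4) ^ T.depth k with hS
  have hpos : (0:ℝ) < S :=
    Finset.sum_pos (fun k _ => by positivity)
      ⟨min i j, Finset.mem_Icc.mpr ⟨le_refl _, min_le_max⟩⟩
  have hDpos : (0:ℝ) < ((1:ℝ)/4) ^ D := by positivity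
  rw [min_pow]
  have hratio : S / ((1:ℝ)/4) ^ D ≤ 2 * 4 ^ e := by
    rw [div_le_iff₀ hDpos]
    have hDe : D = dl + e := by omega
    have h4 : ((4:ℝ))^e * ((1:ℝ)/4)^e = 1 := by rw [← mul_pow]; norm_num
    calc S ≤ 2 * ((1:ℝ)/4) ^ dl := hsum
      _ = 2 * (4:ℝ)^e * (((1:ℝ)/4)^dl * ((1:ℝ)/4)^e) := by
          rw [show (2:ℝ) * (4:ℝ)^e * (((1:ℝ)/4)^dl * ((1:ℝ)/4)^e)
              = 2 * ((1:ℝ)/4)^dl * ((4:ℝ)^e * ((1:ℝ)/4)^e) by ring, h4, mul_one]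
      _ = 2 * (4:ℝ)^e * ((1:ℝ)/4)^D := by rw [hDe, pow_add]
  have hlog : Real.logb 2 (S / ((1:ℝ)/4) ^ D) ≤ Real.logb 2 (2 * (4:ℝ)^e) :=
    (Real.logb_le_logb (by norm_num) (by positivity) (by positivity)).mpr hratio
  have h42 : Real.logb 2 4 = 2 := by
    have h4 : (4:ℝ) = 2 ^ (2:ℕ) := by norm_num
    rw [h4, Real.logb_pow, Real.logb_self_eq_one (by norm_num : (1:ℝ) < 2)]
    norm_num
  have hval : Real.logb 2 (2 * (4:ℝ)^e) = 1 + 2 * e := by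
    rw [Real.logb_mul (by norm_num) (by positivity), Real.logb_pow, h42,
      Real.logb_self_eq_one (by norm_num : (1:ℝ) < 2)]
    ring
  have hec : (e:ℝ) ≤ (T.cost i j : ℝ) := by
    have : (e:ℤ) ≤ T.cost i j := by
      simp only [BT.cost, ← hdl, ← hdi, ← hdj]
      rcases max_choice di dj with hc | hc <;> omega
    exact_mod_cast this
  calc Real.logb 2 (S / ((1:ℝ)/4) ^ D) ≤ 1 + 2 * e := hlog.trans_eq hval
    _ ≤ 2 * (T.cost i j : ℝ) + 1 := by linarith

lemma root_mem {n : ℕ} {T : BT} (hT : T.inorder = List.range' 1 n) (hn : 1 ≤ n) :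
    1 ≤ T.rootLabel ∧ T.rootLabel ≤ n := by
  cases T with
  | leaf =>
    have : n = 0 := by simpa [BT.inorder] using (congrArg List.length hT).symm
    omega
  | node l y r =>
    obtain ⟨-, -, h1, h2, -⟩ := inorder_split hT
    exact ⟨h1, by simpa [BT.rootLabel] using by omega⟩

end Stmt7Aux

/-- For a BST `T` on `{1,…,n}` and a search sequence `x_1,…,x_m`
(with `x_0` the root label of `T`), the positive weights `w_k = 4^{−d_T(k)}` satisfy
`DF(W,X) ≤ 2·R_ℓ(T,X) + m`; in particular, the infimum of `DF(W,X)` over all positive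
weight assignments is at most `2·R_ℓ(T,X) + m`. -/
theorem stmt7 (n m : ℕ) (T : BT) (hT : BT.IsBST n T) (x : ℕ → ℕ)
    (hx : ∀ i ∈ Finset.Icc 1 m, x i ∈ Finset.Icc 1 n) (hx0 : x 0 = T.rootLabel) :
    ((∀ k ∈ Finset.Icc 1 n, 0 < ((1 : ℝ) / 4) ^ T.depth k) ∧
        DF (fun k => ((1 : ℝ) / 4) ^ T.depth k) x m ≤ 2 * (Rlazy T x m : ℝ) + m) ∧
      sInf {c : ℝ | ∃ w : ℕ → ℝ, (∀ k ∈ Finset.Icc 1 n, 0 < w k) ∧ c = DF w x m} ≤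
        2 * (Rlazy T x m : ℝ) + m := by
  have hT' : T.inorder = List.range' 1 n := hT
  have hmem : ∀ t ∈ Finset.Icc 1 m, (1 ≤ x (t-1) ∧ x (t-1) ≤ n) ∧ (1 ≤ x t ∧ x t ≤ n) := by
    intro t ht
    have ht' := Finset.mem_Icc.mp ht
    have hxt := Finset.mem_Icc.mp (hx t ht)
    refine ⟨?_, hxt⟩
    rcases Nat.eq_or_lt_of_le ht'.1 with h1 | h1
    · have hn : 1 ≤ n := le_trans hxt.1 hxt.2
      have h0 : t - 1 = 0 := by omega
      rw [h0, hx0]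
      exact Stmt7Aux.root_mem hT' hn
    · have : t - 1 ∈ Finset.Icc 1 m := Finset.mem_Icc.mpr ⟨by omega, by omega⟩
      exact Finset.mem_Icc.mp (hx _ this)
  have hDF : DF (fun k => ((1:ℝ)/4) ^ T.depth k) x m ≤ 2 * (Rlazy T x m : ℝ) + m := by
    unfold DF
    have hRHS : 2 * (Rlazy T x m : ℝ) + m
        = ∑ t ∈ Finset.Icc 1 m, (2 * (T.cost (x (t-1)) (x t) : ℝ) + 1) := by
      unfold Rlazy
      rw [Finset.sum_add_distrib]
      push_cast
      rw [Finset.mul_sum]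
      simp [Nat.card_Icc]
    rw [hRHS]
    refine Finset.sum_le_sum fun t ht => ?_
    obtain ⟨⟨ha1, ha2⟩, hb1, hb2⟩ := hmem t ht
    exact Stmt7Aux.step n T hT' _ _ ha1 ha2 hb1 hb2
  have hbdd : BddBelow {c : ℝ | ∃ w : ℕ → ℝ, (∀ k ∈ Finset.Icc 1 n, 0 < w k) ∧ c = DF w x m} := by
    refine ⟨0, fun c hc => ?_⟩
    obtain ⟨w, hw, rfl⟩ := hc
    unfold DF
    refine Finset.sum_nonneg fun t ht => ?_
    obtain ⟨⟨ha1, ha2⟩, hb1, hb2⟩ := hmem t ht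
    have hwa : 0 < w (x (t-1)) := hw _ (Finset.mem_Icc.mpr ⟨ha1, ha2⟩)
    have hwb : 0 < w (x t) := hw _ (Finset.mem_Icc.mpr ⟨hb1, hb2⟩)
    have hsumge : w (x (t-1)) ≤ ∑ k ∈ Finset.Icc (min (x (t-1)) (x t)) (max (x (t-1)) (x t)), w k := by
      refine Finset.single_le_sum (fun k hk => ?_)
        (Finset.mem_Icc.mpr ⟨min_le_left _ _, le_max_left _ _⟩)
      have hk' := Finset.mem_Icc.mp hk
      exact le_of_lt (hw k (Finset.mem_Icc.mpr ⟨by omega, by omega⟩))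
    have h1r : 1 ≤ (∑ k ∈ Finset.Icc (min (x (t-1)) (x t)) (max (x (t-1)) (x t)), w k) /
        min (w (x (t-1))) (w (x t)) := by
      rw [le_div_iff₀ (lt_min hwa hwb)]
      calc (1:ℝ) * min (w (x (t-1))) (w (x t)) = min (w (x (t-1))) (w (x t)) := one_mul _
        _ ≤ w (x (t-1)) := min_le_left _ _
        _ ≤ _ := hsumge
    exact Real.logb_nonneg (by norm_num) h1r
  refine ⟨⟨fun k _ => by positivity, hDF⟩, le_trans (csInf_le hbdd ?_) hDF⟩
  exact ⟨fun k => ((1:ℝ)/4) ^ T.depth k, fun k _ => by positivity, rfl⟩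
end

section
/- For every binary search tree T on keys {1,…,n} with n ≥ 1, the total cost of visiting the keys in increasing order with a lazy finger satisfies the exact identity ∑_{i=1}^{n−1} r(T,i,i+1) = 2(n−1) − d_T(1) − d_T(n). -/
open Finset

namespace BT

lemma lca_ub : ∀ (T : BT) (i j : ℕ), i ≤ j → T.lca i j ≤ j := by
  intro T
  induction T with
  | leaf => intro i j h; simp [lca]
  | node l x r ihl ihr =>
    intro i j h
    simp only [lca]
    split_ifs with h1 h2
    · exact ihl i j h
    · exact ihr i j h
    · omega

lemma inorder_decomp {l r : BT} {x a m : ℕ}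
    (h : (BT.node l x r).inorder = List.range' a m) :
    l.inorder = List.range' a l.inorder.length ∧
    x = a + l.inorder.length ∧
    r.inorder = List.range' (a + l.inorder.length + 1) r.inorder.length ∧
    m = l.inorder.length + 1 + r.inorder.length := by
  have hlen : m = l.inorder.length + 1 + r.inorder.length := by
    have := congrArg List.length h
    simp [inorder] at this
    omega
  have hsplit : List.range' a m =
      List.range' a l.inorder.length ++
        ((a + l.inorder.length) :: List.range' (a + l.inorder.length + 1) r.inorder.length) := by
    rw [← List.range'_succ, List.range'_append_1]
    congr 1
    omega
  rw [inorder, hsplit] at h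
  have h2 := List.append_inj h (by simp)
  obtain ⟨he1, he2⟩ := h2
  rw [List.cons.injEq] at he2
  exact ⟨he1, he2.1, he2.2, hlen⟩

lemma lca_lb : ∀ (T : BT) (a m i j : ℕ), T.inorder = List.range' a m →
    a ≤ i → i ≤ j → j < a + m → i ≤ T.lca i j := by
  intro T
  induction T with
  | leaf => intro a m i j h hai hij hj; simp [inorder] at h; omega
  | node l x r ihl ihr =>
    intro a m i j h hai hij hj
    obtain ⟨hl, hx, hr, hm⟩ := inorder_decomp h
    simp only [lca]
    split_ifs with h1 h2
    · exact ihl a l.inorder.length i j hl hai hij (by omega)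
    · exact ihr (a + l.inorder.length + 1) r.inorder.length i j hr (by omega) hij (by omega)
    · omega

/-- depth in node for keys left of root -/
lemma depth_left {l r : BT} {x k : ℕ} (hk : k < x) :
    (BT.node l x r).depth k = l.depth k + 1 := by
  simp [depth, hk, Nat.ne_of_lt hk]

lemma depth_right {l r : BT} {x k : ℕ} (hk : x < k) :
    (BT.node l x r).depth k = r.depth k + 1 := by
  simp [depth, Nat.ne_of_gt hk, Nat.lt_asymm hk]

lemma depth_root {l r : BT} {x : ℕ} : (BT.node l x r).depth x = 0 := by
  simp [depth]

lemma cost_left {l r : BT} {x i : ℕ} (hi : i + 1 < x) :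
    (BT.node l x r).cost i (i + 1) = l.cost i (i + 1) := by
  have hlca : (BT.node l x r).lca i (i + 1) = l.lca i (i + 1) := by
    simp only [lca]
    rw [if_pos ⟨by omega, hi⟩]
  have hub : l.lca i (i + 1) < x := lt_of_le_of_lt (lca_ub l i (i + 1) (by omega)) hi
  simp only [cost, hlca, depth_left (by omega : i < x), depth_left hi, depth_left hub]
  push_cast
  ring

lemma cost_right {l r : BT} {x i m : ℕ}
    (hr : r.inorder = List.range' (x + 1) m) (hi : x < i) (him : i + 1 < x + 1 + m) :
    (BT.node l x r).cost i (i + 1) = r.cost i (i + 1) := by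
  have hlca : (BT.node l x r).lca i (i + 1) = r.lca i (i + 1) := by
    simp only [lca]
    rw [if_neg (by omega), if_pos ⟨hi, by omega⟩]
  have hlb : x < r.lca i (i + 1) :=
    lt_of_lt_of_le hi (lca_lb r (x + 1) m i (i + 1) hr (by omega) (by omega) him)
  simp only [cost, hlca, depth_right hi, depth_right (by omega : x < i + 1), depth_right hlb]
  push_cast
  ring

lemma cost_cross_left {l r : BT} {x : ℕ} (hx : 1 ≤ x) :
    (BT.node l x r).cost (x - 1) x = (l.depth (x - 1) : ℤ) + 1 := by
  have hlca : (BT.node l x r).lca (x - 1) x = x := by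
    simp only [lca]
    rw [if_neg (by omega), if_neg (by omega)]
  simp only [cost, hlca, depth_root, depth_left (by omega : x - 1 < x)]
  push_cast
  ring

lemma cost_cross_right {l r : BT} {x : ℕ} :
    (BT.node l x r).cost x (x + 1) = (r.depth (x + 1) : ℤ) + 1 := by
  have hlca : (BT.node l x r).lca x (x + 1) = x := by
    simp only [lca]
    rw [if_neg (by omega), if_neg (by omega)]
  simp only [cost, hlca, depth_root, depth_right (by omega : x < x + 1)]
  push_cast
  ring

lemma sum_range_split (f : ℕ → ℤ) (m n : ℕ) :
    ∑ i ∈ Finset.range (m + n), f i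
      = ∑ i ∈ Finset.range m, f i + ∑ i ∈ Finset.range n, f (m + i) := by
  induction n with
  | zero => simp
  | succ k ih => rw [← Nat.add_assoc, Finset.sum_range_succ, Finset.sum_range_succ, ih]; ring

lemma main : ∀ (T : BT) (a m : ℕ), T.inorder = List.range' a m → 1 ≤ m →
    ∑ i ∈ Finset.range (m - 1), T.cost (a + i) (a + i + 1)
      = 2 * ((m : ℤ) - 1) - T.depth a - T.depth (a + m - 1) := by
  intro T
  induction T with
  | leaf => intro a m h hm; simp [inorder] at h; omega
  | node l x r ihl ihr =>
    intro a m h hm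
    obtain ⟨hl, hx, hr, hmeq⟩ := inorder_decomp h
    revert hl hx hr hmeq
    generalize l.inorder.length = la
    generalize r.inorder.length = lr
    intro hl hx hr hmeq
    have hm1 : m - 1 = la + lr := by omega
    rw [hm1, sum_range_split]
    rcases Nat.eq_zero_or_pos la with hla0 | hla1
    · subst hla0
      have hax : x = a := by omega
      subst hax
      rcases Nat.eq_zero_or_pos lr with hlr0 | hlr1
      · -- single node
        subst hlr0
        have hm2 : x + m - 1 = x := by omega
        simp only [Finset.range_zero, Finset.sum_empty, hm2, depth_root]
        have : (m : ℤ) = 1 := by omega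
        rw [this]
        ring
      · -- la = 0
        obtain ⟨k, rfl⟩ : ∃ k, lr = k + 1 := ⟨lr - 1, by omega⟩
        simp only [Finset.range_zero, Finset.sum_empty, Nat.zero_add, zero_add]
        rw [Finset.sum_range_succ']
        have h0 : (BT.node l x r).cost (x + 0) (x + 0 + 1) = (r.depth (x + 1) : ℤ) + 1 := by
          simpa using cost_cross_right (l := l) (r := r) (x := x)
        have hr' : r.inorder = List.range' (x + 1) (k + 1) := by simpa using hr
        have hrest : ∀ i ∈ Finset.range k,
            (BT.node l x r).cost (x + (i + 1)) (x + (i + 1) + 1)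
              = r.cost (x + (i + 1)) (x + (i + 1) + 1) := by
          intro i hi
          simp only [Finset.mem_range] at hi
          exact cost_right (m := k + 1) hr' (by omega) (by omega)
        have hksimp : (k + 1 : ℕ) - 1 = k := by omega
        rw [Finset.sum_congr rfl hrest, h0]
        have ihr' := ihr (x + 1) (k + 1) hr' (by omega)
        rw [hksimp] at ihr'
        have e1 : x + 1 + (k + 1) - 1 = x + 1 + k := by omega
        rw [e1] at ihr'
        have hsum : ∑ i ∈ Finset.range k, r.cost (x + (i + 1)) (x + (i + 1) + 1)
            = ∑ i ∈ Finset.range k, r.cost (x + 1 + i) (x + 1 + i + 1) := by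
          apply Finset.sum_congr rfl; intro i _; congr 1 <;> omega
        rw [hsum, ihr']
        have hd1 : (BT.node l x r).depth x = 0 := depth_root
        have hd2 : (BT.node l x r).depth (x + m - 1) = r.depth (x + 1 + k) + 1 := by
          have e2 : x + m - 1 = x + 1 + k := by omega
          rw [e2, depth_right (by omega)]
        rw [hd1, hd2]
        have hmz : (m : ℤ) = k + 2 := by omega
        push_cast
        rw [hmz]
        ring
    · -- la ≥ 1
      obtain ⟨j, rfl⟩ : ∃ j, la = j + 1 := ⟨la - 1, by omega⟩
      have hjsimp : (j + 1 : ℕ) - 1 = j := by omega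
      have hleft : ∑ i ∈ Finset.range (j + 1), (BT.node l x r).cost (a + i) (a + i + 1)
          = 2 * (((j : ℤ) + 1) - 1) - l.depth a - l.depth (a + j) + (l.depth (a + j) + 1) := by
        rw [Finset.sum_range_succ]
        have hlast : (BT.node l x r).cost (a + j) (a + j + 1)
            = (l.depth (a + j) : ℤ) + 1 := by
          have h2 : a + j + 1 = x := by omega
          have h1 : x - 1 = a + j := by omega
          rw [h2, ← h1]
          exact cost_cross_left (by omega)
        have hrest : ∀ i ∈ Finset.range j,
            (BT.node l x r).cost (a + i) (a + i + 1) = l.cost (a + i) (a + i + 1) := by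
          intro i hi
          simp only [Finset.mem_range] at hi
          exact cost_left (by omega)
        have ihl' := ihl a (j + 1) hl (by omega)
        rw [hjsimp] at ihl'
        have e3 : a + (j + 1) - 1 = a + j := by omega
        rw [e3] at ihl'
        rw [Finset.sum_congr rfl hrest, hlast, ihl']
        push_cast
        ring
      rcases Nat.eq_zero_or_pos lr with hlr0 | hlr1
      · -- lr = 0
        subst hlr0
        simp only [Finset.range_zero, Finset.sum_empty, add_zero]
        rw [hleft]
        have hd1 : (BT.node l x r).depth a = l.depth a + 1 := depth_left (by omega)
        have hd2 : (BT.node l x r).depth (a + m - 1) = 0 := by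
          have : a + m - 1 = x := by omega
          rw [this, depth_root]
        rw [hd1, hd2]
        have hmz : (m : ℤ) = j + 2 := by omega
        push_cast
        rw [hmz]
        ring
      · -- both nonempty
        obtain ⟨k, rfl⟩ : ∃ k, lr = k + 1 := ⟨lr - 1, by omega⟩
        have hr' : r.inorder = List.range' (x + 1) (k + 1) := by rw [hr]; congr 1; omega
        have hright : ∑ i ∈ Finset.range (k + 1),
              (BT.node l x r).cost (a + (j + 1 + i)) (a + (j + 1 + i) + 1)
            = (r.depth (x + 1) : ℤ) + 1
              + (2 * (((k : ℤ) + 1) - 1) - r.depth (x + 1) - r.depth (x + 1 + k)) := by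
          rw [Finset.sum_range_succ']
          have h0 : (BT.node l x r).cost (a + (j + 1 + 0)) (a + (j + 1 + 0) + 1)
              = (r.depth (x + 1) : ℤ) + 1 := by
            have h1 : a + (j + 1 + 0) = x := by omega
            rw [h1]
            exact cost_cross_right
          have hrest : ∀ i ∈ Finset.range k,
              (BT.node l x r).cost (a + (j + 1 + (i + 1))) (a + (j + 1 + (i + 1)) + 1)
                = r.cost (a + (j + 1 + (i + 1))) (a + (j + 1 + (i + 1)) + 1) := by
            intro i hi
            simp only [Finset.mem_range] at hi
            exact cost_right (m := k + 1) hr' (by omega) (by omega)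
          have hksimp : (k + 1 : ℕ) - 1 = k := by omega
          rw [Finset.sum_congr rfl hrest, h0]
          have ihr' := ihr (x + 1) (k + 1) hr' (by omega)
          rw [hksimp] at ihr'
          have e1 : x + 1 + (k + 1) - 1 = x + 1 + k := by omega
          rw [e1] at ihr'
          have hsum : ∑ i ∈ Finset.range k,
              r.cost (a + (j + 1 + (i + 1))) (a + (j + 1 + (i + 1)) + 1)
                = ∑ i ∈ Finset.range k, r.cost (x + 1 + i) (x + 1 + i + 1) := by
            apply Finset.sum_congr rfl; intro i _; congr 1 <;> omega
          rw [hsum, ihr']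
          push_cast
          ring
        rw [hleft, hright]
        have hd1 : (BT.node l x r).depth a = l.depth a + 1 := depth_left (by omega)
        have hd2 : (BT.node l x r).depth (a + m - 1) = r.depth (x + 1 + k) + 1 := by
          have : a + m - 1 = x + 1 + k := by omega
          rw [this, depth_right (by omega)]
        rw [hd1, hd2]
        have hmz : (m : ℤ) = j + k + 3 := by omega
        push_cast
        rw [hmz]
        ring

end BT

/-- For every BST `T` on `{1,…,n}` with `n ≥ 1`,
`∑_{i=1}^{n−1} r(T,i,i+1) = 2(n−1) − d_T(1) − d_T(n)`. -/
theorem stmt11 (n : ℕ) (hn : 1 ≤ n) (T : BT) (hT : BT.IsBST n T) :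
    ∑ i ∈ Finset.Icc 1 (n - 1), T.cost i (i + 1) =
      2 * ((n : ℤ) - 1) - (T.depth 1 : ℤ) - (T.depth n : ℤ) := by
  have hT' : T.inorder = List.range' 1 n := hT
  have h1 : Finset.Icc 1 (n - 1) = Finset.Ico 1 n := by
    ext i
    simp [Finset.mem_Icc, Finset.mem_Ico]
    omega
  rw [h1, Finset.sum_Ico_eq_sum_range]
  have h2 := BT.main T 1 n hT' hn
  have h3 : 1 + n - 1 = n := by omega
  rw [h3] at h2
  exact h2
end

section
/- Fix n ≥ 1 and k ≥ 1, and let X be the cyclic sequential search sequence of length m = k·n defined by x_i = ((i−1) mod n) + 1. Then for every binary search tree T on keys {1,…,n} (with x_0 the root label of T): (a) R_ℓ(T,X) ≤ 4m, and (b) R_r(T,X) ≥ k·∑_{i=1}^{n} ⌊log₂ i⌋. In particular, the sequential sequence can be executed in O(m) time with lazy finger on any tree, but requires Ω(m·log n) time with root finger on every tree. -/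
open Finset

namespace Aux13

/-- `D m = ∑_{i=1}^m ⌊log₂ i⌋`. -/
def D (m : ℕ) : ℕ := ∑ i ∈ Finset.range m, Nat.log 2 (i + 1)

lemma D_succ (m : ℕ) : D (m + 1) = D m + Nat.log 2 (m + 1) := Finset.sum_range_succ _ _

lemma log2_two_mul {i : ℕ} (hi : 1 ≤ i) : Nat.log 2 (2 * i) = Nat.log 2 i + 1 := by
  rw [mul_comm]; exact Nat.log_mul_base (by norm_num) (by omega)

lemma log2_two_mul_add_one {i : ℕ} (hi : 1 ≤ i) : Nat.log 2 (2 * i + 1) = Nat.log 2 i + 1 := by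
  apply Nat.log_eq_of_pow_le_of_lt_pow
  · have h1 := Nat.pow_log_le_self 2 (show i ≠ 0 by omega)
    have : 2 ^ (Nat.log 2 i + 1) = 2 * 2 ^ Nat.log 2 i := by ring
    omega
  · have h2 := Nat.lt_pow_succ_log_self (show 1 < 2 by norm_num) i
    have : 2 ^ (Nat.log 2 i + 1 + 1) = 2 * 2 ^ (Nat.log 2 i + 1) := by ring
    omega

lemma D_odd (m : ℕ) : D (2 * m + 1) = 2 * D m + 2 * m := by
  induction m with
  | zero => simp [D]
  | succ m ih =>
      have hA : D (2 * m + 3) = D (2 * m + 2) + Nat.log 2 (2 * m + 3) := by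
        rw [show (2 * m + 3 : ℕ) = 2 * m + 2 + 1 from by ring]; exact D_succ _
      have hB : D (2 * m + 2) = D (2 * m + 1) + Nat.log 2 (2 * m + 2) := by
        rw [show (2 * m + 2 : ℕ) = 2 * m + 1 + 1 from by ring]; exact D_succ _
      have h1 : Nat.log 2 (2 * m + 2) = Nat.log 2 (m + 1) + 1 := by
        rw [show (2 * m + 2 : ℕ) = 2 * (m + 1) from by ring]; exact log2_two_mul (by omega)
      have h2 : Nat.log 2 (2 * m + 3) = Nat.log 2 (m + 1) + 1 := by
        rw [show (2 * m + 3 : ℕ) = 2 * (m + 1) + 1 from by ring]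
        exact log2_two_mul_add_one (by omega)
      have hC := D_succ m
      rw [show (2 * (m + 1) + 1 : ℕ) = 2 * m + 3 from by ring]
      omega

lemma D_even (m : ℕ) : D (2 * m + 2) = D m + D (m + 1) + (2 * m + 1) := by
  induction m with
  | zero =>
      have h2 : Nat.log 2 2 = 1 := by
        rw [show (2 : ℕ) = 2 * 1 from by norm_num, log2_two_mul le_rfl]; simp
      simp [D, Finset.sum_range_succ, h2]
  | succ m ih =>
      have hA : D (2 * m + 4) = D (2 * m + 3) + Nat.log 2 (2 * m + 4) := by
        rw [show (2 * m + 4 : ℕ) = 2 * m + 3 + 1 from by ring]; exact D_succ _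
      have hB : D (2 * m + 3) = D (2 * m + 2) + Nat.log 2 (2 * m + 3) := by
        rw [show (2 * m + 3 : ℕ) = 2 * m + 2 + 1 from by ring]; exact D_succ _
      have h1 : Nat.log 2 (2 * m + 3) = Nat.log 2 (m + 1) + 1 := by
        rw [show (2 * m + 3 : ℕ) = 2 * (m + 1) + 1 from by ring]
        exact log2_two_mul_add_one (by omega)
      have h2 : Nat.log 2 (2 * m + 4) = Nat.log 2 (m + 2) + 1 := by
        rw [show (2 * m + 4 : ℕ) = 2 * (m + 2) from by ring]; exact log2_two_mul (by omega)
      have hC : D (m + 2) = D (m + 1) + Nat.log 2 (m + 2) := by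
        rw [show (m + 2 : ℕ) = m + 1 + 1 from by omega]; exact D_succ _
      have hD := D_succ m
      rw [show (2 * (m + 1) + 2 : ℕ) = 2 * m + 4 from by ring,
        show (m + 1 + 1 : ℕ) = m + 2 from by omega]
      omega

lemma Dkey_aux (Δ : ℕ) : ∀ p q, p ≤ q → q - p = Δ → D (p + q + 1) ≤ D p + D q + p + q := by
  induction Δ using Nat.strong_induction_on with
  | _ Δ ih =>
    intro p q hpq hΔ
    by_cases h0 : q = p
    · subst h0
      have : q + q + 1 = 2 * q + 1 := by ring
      rw [this, D_odd]; omega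
    · by_cases h1 : q = p + 1
      · subst h1
        have : p + (p + 1) + 1 = 2 * p + 2 := by ring
        rw [this, D_even]; omega
      · have hge : p + 2 ≤ q := by omega
        have hrec := ih (Δ - 2) (by omega) (p + 1) (q - 1) (by omega) (by omega)
        have e : p + 1 + (q - 1) + 1 = p + q + 1 := by omega
        rw [e] at hrec
        have h2 : D (p + 1) = D p + Nat.log 2 (p + 1) := D_succ p
        have h3 : D q = D (q - 1) + Nat.log 2 q := by
          rw [show q = (q - 1) + 1 from by omega, D_succ]
          rw [show q - 1 + 1 = q from by omega]
        have h4 : Nat.log 2 (p + 1) ≤ Nat.log 2 q := Nat.log_mono_right (by omega)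
        omega

lemma Dkey (p q : ℕ) : D (p + q + 1) ≤ D p + D q + p + q := by
  rcases le_total p q with h | h
  · exact Dkey_aux (q - p) p q h rfl
  · have := Dkey_aux (p - q) q p h rfl
    have e : q + p + 1 = p + q + 1 := by omega
    rw [e] at this; omega



open BT

lemma inorder_split {l r : BT} {x a s : ℕ}
    (h : (BT.node l x r).inorder = List.range' a s) :
    l.inorder = List.range' a l.inorder.length ∧
    x = a + l.inorder.length ∧
    r.inorder = List.range' (a + l.inorder.length + 1) r.inorder.length ∧
    s = l.inorder.length + r.inorder.length + 1 := by
  have h' : l.inorder ++ x :: r.inorder = List.range' a s := h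
  set p := l.inorder.length with hp
  set q := r.inorder.length with hq
  have hlen : s = p + q + 1 := by
    have := congrArg List.length h'
    simp only [List.length_append, List.length_cons, List.length_range'] at this
    omega
  have h2 : List.range' a s = List.range' a p ++ List.range' (a + p) (q + 1) := by
    rw [hlen, show p + q + 1 = (q + 1) + p from by ring, ← List.range'_append]
    norm_num
    omega
  have h3 := List.append_inj (h'.trans h2) (by simp [List.length_range', hp])
  obtain ⟨hL, hR⟩ := h3
  rw [List.range'_succ] at hR
  simp only [List.cons.injEq] at hR
  exact ⟨hL, hR.1, hR.2, hlen⟩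

lemma depth_node_lt {l r : BT} {x i : ℕ} (h : i < x) :
    (BT.node l x r).depth i = l.depth i + 1 := by
  simp [BT.depth, h, Nat.ne_of_lt h]

lemma depth_node_gt {l r : BT} {x i : ℕ} (h : x < i) :
    (BT.node l x r).depth i = r.depth i + 1 := by
  simp [BT.depth, Nat.ne_of_gt h, not_lt_of_gt h]

lemma depth_node_self {l r : BT} {x : ℕ} : (BT.node l x r).depth x = 0 := by
  simp [BT.depth]

lemma lca_bounds : ∀ (T : BT) {a s i j : ℕ}, T.inorder = List.range' a s →
    a ≤ i → i < a + s → a ≤ j → j < a + s →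
    min i j ≤ T.lca i j ∧ T.lca i j ≤ max i j := by
  intro T
  induction T with
  | leaf =>
      intro a s i j h hi1 hi2 hj1 hj2
      have : s = 0 := by
        have := congrArg List.length h
        simpa [BT.inorder] using this.symm
      omega
  | node l x r ihl ihr =>
      intro a s i j h hi1 hi2 hj1 hj2
      obtain ⟨hl, hx, hr, hs⟩ := inorder_split h
      by_cases h1 : i < x ∧ j < x
      · have := ihl hl hi1 (by omega) hj1 (by omega)
        simpa [BT.lca, h1] using this
      · by_cases h2 : x < i ∧ x < j
        · have hi1' : a + l.inorder.length + 1 ≤ i := by omega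
          have hi2' : i < a + l.inorder.length + 1 + r.inorder.length := by omega
          have hj1' : a + l.inorder.length + 1 ≤ j := by omega
          have hj2' : j < a + l.inorder.length + 1 + r.inorder.length := by omega
          have := ihr hr hi1' hi2' hj1' hj2'
          simpa [BT.lca, h1, h2] using this
        · simp only [BT.lca, h1, h2, if_false]
          omega

lemma depth_lca_le : ∀ (T : BT) {a s i j : ℕ}, T.inorder = List.range' a s →
    a ≤ i → i < a + s → a ≤ j → j < a + s →
    T.depth (T.lca i j) ≤ T.depth i := by
  intro T
  induction T with
  | leaf => intro a s i j h hi1 hi2 hj1 hj2; simp [BT.depth]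
  | node l x r ihl ihr =>
      intro a s i j h hi1 hi2 hj1 hj2
      obtain ⟨hl, hx, hr, hs⟩ := inorder_split h
      by_cases h1 : i < x ∧ j < x
      · have hb := lca_bounds l hl hi1 (by omega) hj1 (by omega)
        have hlt : l.lca i j < x := by omega
        have e : (BT.node l x r).lca i j = l.lca i j := by simp [BT.lca, h1]
        rw [e, depth_node_lt hlt, depth_node_lt h1.1]
        exact Nat.add_le_add_right (ihl hl hi1 (by omega) hj1 (by omega)) 1
      · by_cases h2 : x < i ∧ x < j
        · have hi1' : a + l.inorder.length + 1 ≤ i := by omega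
          have hi2' : i < a + l.inorder.length + 1 + r.inorder.length := by omega
          have hj1' : a + l.inorder.length + 1 ≤ j := by omega
          have hj2' : j < a + l.inorder.length + 1 + r.inorder.length := by omega
          have hb := lca_bounds r hr hi1' hi2' hj1' hj2'
          have hgt : x < r.lca i j := by omega
          have e : (BT.node l x r).lca i j = r.lca i j := by simp [BT.lca, h1, h2]
          rw [e, depth_node_gt hgt, depth_node_gt h2.1]
          exact Nat.add_le_add_right (ihr hr hi1' hi2' hj1' hj2') 1
        · have e : (BT.node l x r).lca i j = x := by simp [BT.lca, h1, h2]
          rw [e, depth_node_self]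
          exact Nat.zero_le _

lemma lca_comm : ∀ (T : BT) (i j : ℕ), T.lca i j = T.lca j i := by
  intro T
  induction T with
  | leaf => intro i j; rfl
  | node l x r ihl ihr =>
      intro i j
      by_cases h1 : i < x ∧ j < x
      · simp [BT.lca, h1, And.intro h1.2 h1.1, ihl]
      · by_cases h2 : x < i ∧ x < j
        · have h1' : ¬ (j < x ∧ i < x) := fun hc => h1 ⟨hc.2, hc.1⟩
          simp [BT.lca, h1, h1', h2, And.intro h2.2 h2.1, ihr]
        · have h1' : ¬ (j < x ∧ i < x) := fun hc => h1 ⟨hc.2, hc.1⟩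
          have h2' : ¬ (x < j ∧ x < i) := fun hc => h2 ⟨hc.2, hc.1⟩
          simp [BT.lca, h1, h1', h2, h2']

lemma cost_nonneg {T : BT} {a s i j : ℕ} (h : T.inorder = List.range' a s)
    (hi1 : a ≤ i) (hi2 : i < a + s) (hj1 : a ≤ j) (hj2 : j < a + s) :
    0 ≤ T.cost i j := by
  have h1 := depth_lca_le T h hi1 hi2 hj1 hj2
  have h2 := depth_lca_le T h hj1 hj2 hi1 hi2
  rw [lca_comm T j i] at h2
  unfold BT.cost
  have c1 : (T.depth (T.lca i j) : ℤ) ≤ T.depth i := by exact_mod_cast h1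
  have c2 : (T.depth (T.lca i j) : ℤ) ≤ T.depth j := by exact_mod_cast h2
  linarith

lemma cost_le (T : BT) (i j : ℕ) : T.cost i j ≤ (T.depth i : ℤ) + T.depth j := by
  unfold BT.cost
  have : (0 : ℤ) ≤ T.depth (T.lca i j) := by positivity
  linarith

lemma inorder_split' {l r : BT} {x a s : ℕ} (h : (BT.node l x r).inorder = List.range' a s) :
    ∃ p q, l.inorder = List.range' a p ∧ x = a + p ∧
      r.inorder = List.range' (a + p + 1) q ∧ s = p + q + 1 :=
  ⟨_, _, (inorder_split h).1, (inorder_split h).2.1, (inorder_split h).2.2.1,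
    (inorder_split h).2.2.2⟩

lemma cost_node_left {l r : BT} {x a p i j : ℕ} (hl : l.inorder = List.range' a p)
    (hx : x = a + p) (hi1 : a ≤ i) (hi2 : i < a + p) (hj1 : a ≤ j) (hj2 : j < a + p) :
    (BT.node l x r).cost i j = l.cost i j := by
  have hb := lca_bounds l hl hi1 hi2 hj1 hj2
  have hltx : l.lca i j < x := by omega
  have e : (BT.node l x r).lca i j = l.lca i j := by
    simp [BT.lca, show i < x ∧ j < x from ⟨by omega, by omega⟩]
  unfold BT.cost
  rw [e, depth_node_lt (show i < x by omega), depth_node_lt (show j < x by omega),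
    depth_node_lt hltx]
  push_cast; ring

lemma cost_node_right {l r : BT} {x a p q i j : ℕ}
    (hr : r.inorder = List.range' (a + p + 1) q) (hx : x = a + p)
    (hi1 : a + p + 1 ≤ i) (hi2 : i < a + p + 1 + q)
    (hj1 : a + p + 1 ≤ j) (hj2 : j < a + p + 1 + q) :
    (BT.node l x r).cost i j = r.cost i j := by
  have hb := lca_bounds r hr hi1 hi2 hj1 hj2
  have hgtx : x < r.lca i j := by omega
  have h1 : ¬ (i < x ∧ j < x) := by omega
  have h2 : x < i ∧ x < j := by omega
  have e : (BT.node l x r).lca i j = r.lca i j := by simp [BT.lca, h1, h2]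
  unfold BT.cost
  rw [e, depth_node_gt (show x < i by omega), depth_node_gt (show x < j by omega),
    depth_node_gt hgtx]
  push_cast; ring

lemma cost_node_cross_left {l r : BT} {x i : ℕ} (h : i < x) :
    (BT.node l x r).cost i x = ((BT.node l x r).depth i : ℤ) := by
  have e : (BT.node l x r).lca i x = x := by
    simp [BT.lca, lt_irrefl, h]
  unfold BT.cost
  rw [e, depth_node_self]
  push_cast; ring

lemma cost_node_cross_right {l r : BT} {x j : ℕ} (h : x < j) :
    (BT.node l x r).cost x j = ((BT.node l x r).depth j : ℤ) := by
  have e : (BT.node l x r).lca x j = x := by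
    simp [BT.lca, lt_irrefl]
  unfold BT.cost
  rw [e, depth_node_self]
  push_cast; ring

lemma path_sum : ∀ (T : BT) (a s' : ℕ), T.inorder = List.range' a (s' + 1) →
    (∑ t ∈ Finset.range s', T.cost (a + t) (a + t + 1)) + (T.depth a : ℤ)
      + (T.depth (a + s') : ℤ) = 2 * s' := by
  intro T
  induction T with
  | leaf =>
      intro a s' h
      exfalso
      have := congrArg List.length h
      simp [BT.inorder] at this
  | node l x r ihl ihr =>
      intro a s' h
      obtain ⟨p, q, hl, hx, hr, hs⟩ := inorder_split' h
      have hs' : s' = p + q := by omega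
      rcases p with _ | p' <;> rcases q with _ | q'
      · -- p = 0, q = 0
        have h0 : s' = 0 := by omega
        subst h0
        have hax : x = a := by omega
        subst hax
        simp [depth_node_self]
      · -- p = 0, q = q' + 1
        have h0 : s' = q' + 1 := by omega
        subst h0
        have hax : x = a := by omega
        subst hax
        simp only [Nat.add_zero, Nat.zero_add] at hr
        rw [Finset.sum_range_succ']
        have e0 : (BT.node l x r).cost (x + 0) (x + 0 + 1)
            = ((r.depth (x + 1) : ℤ) + 1) := by
          rw [show x + 0 = x from rfl, cost_node_cross_right (show x < x + 1 by omega),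
            depth_node_gt (show x < x + 1 by omega)]
          push_cast; ring
        have e1 : ∀ t ∈ Finset.range q', (BT.node l x r).cost (x + (t + 1)) (x + (t + 1) + 1)
            = r.cost (x + 1 + t) (x + 1 + t + 1) := by
          intro t ht
          simp only [Finset.mem_range] at ht
          rw [show x + (t + 1) + 1 = x + 1 + t + 1 from by omega,
            show x + (t + 1) = x + 1 + t from by omega]
          exact cost_node_right (p := 0) (by simpa using hr) (by omega) (by omega) (by omega)
            (by omega) (by omega)
        rw [Finset.sum_congr rfl e1, e0]
        have e2 : (BT.node l x r).depth x = 0 := depth_node_self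
        have e3 : (BT.node l x r).depth (x + (q' + 1)) = r.depth (x + (q' + 1)) + 1 :=
          depth_node_gt (by omega)
        have ih := ihr (x + 1) q' hr
        rw [e2, e3]
        have e4 : x + 1 + q' = x + (q' + 1) := by omega
        rw [e4] at ih
        push_cast
        push_cast at ih
        linarith
      · -- p = p' + 1, q = 0
        have h0 : s' = p' + 1 := by omega
        subst h0
        rw [Finset.sum_range_succ]
        have elast : (BT.node l x r).cost (a + p') (a + p' + 1)
            = ((l.depth (a + p') : ℤ) + 1) := by
          rw [show a + p' + 1 = x from by omega, cost_node_cross_left (by omega),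
            depth_node_lt (show a + p' < x by omega)]
          push_cast; ring
        have e1 : ∀ t ∈ Finset.range p', (BT.node l x r).cost (a + t) (a + t + 1)
            = l.cost (a + t) (a + t + 1) := by
          intro t ht
          simp only [Finset.mem_range] at ht
          exact cost_node_left hl hx (by omega) (by omega) (by omega) (by omega)
        rw [Finset.sum_congr rfl e1, elast]
        have e2 : (BT.node l x r).depth a = l.depth a + 1 := depth_node_lt (by omega)
        have e3 : (BT.node l x r).depth (a + (p' + 1)) = 0 := by
          rw [show a + (p' + 1) = x from by omega]; exact depth_node_self
        have ih := ihl a p' hl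
        rw [e2, e3]
        push_cast
        push_cast at ih
        linarith
      · -- p = p' + 1, q = q' + 1
        have h0 : s' = (p' + 1) + (q' + 1) := by omega
        subst h0
        rw [Finset.sum_range_add, Finset.sum_range_succ, Finset.sum_range_succ']
        -- left in-l terms
        have e1 : ∀ t ∈ Finset.range p', (BT.node l x r).cost (a + t) (a + t + 1)
            = l.cost (a + t) (a + t + 1) := by
          intro t ht
          simp only [Finset.mem_range] at ht
          exact cost_node_left hl hx (by omega) (by omega) (by omega) (by omega)
        have elast : (BT.node l x r).cost (a + p') (a + p' + 1)
            = ((l.depth (a + p') : ℤ) + 1) := by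
          rw [show a + p' + 1 = x from by omega, cost_node_cross_left (by omega),
            depth_node_lt (show a + p' < x by omega)]
          push_cast; ring
        -- right in-r terms
        have e2 : ∀ t ∈ Finset.range q',
            (BT.node l x r).cost (a + (p' + 1 + (t + 1))) (a + (p' + 1 + (t + 1)) + 1)
            = r.cost (a + (p' + 1) + 1 + t) (a + (p' + 1) + 1 + t + 1) := by
          intro t ht
          simp only [Finset.mem_range] at ht
          rw [show a + (p' + 1 + (t + 1)) + 1 = a + (p' + 1) + 1 + t + 1 from by omega,
            show a + (p' + 1 + (t + 1)) = a + (p' + 1) + 1 + t from by omega]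
          exact cost_node_right hr hx (by omega) (by omega) (by omega) (by omega)
        have efirst : (BT.node l x r).cost (a + (p' + 1 + 0)) (a + (p' + 1 + 0) + 1)
            = ((r.depth (a + (p' + 1) + 1) : ℤ) + 1) := by
          rw [show a + (p' + 1 + 0) = x from by omega,
            show x + 1 = a + (p' + 1) + 1 from by omega,
            cost_node_cross_right (by omega),
            depth_node_gt (show x < a + (p' + 1) + 1 by omega)]
          push_cast; ring
        rw [Finset.sum_congr rfl e1, Finset.sum_congr rfl e2, elast, efirst]
        have e3 : (BT.node l x r).depth a = l.depth a + 1 := depth_node_lt (by omega)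
        have e4 : (BT.node l x r).depth (a + (p' + 1 + (q' + 1)))
            = r.depth (a + (p' + 1 + (q' + 1))) + 1 := depth_node_gt (by omega)
        have ih1 := ihl a p' hl
        have ih2 := ihr (a + (p' + 1) + 1) q' hr
        have e5 : a + (p' + 1) + 1 + q' = a + (p' + 1 + (q' + 1)) := by omega
        rw [e5] at ih2
        rw [e3, e4]
        push_cast
        push_cast at ih1 ih2
        linarith

lemma depth_sum_ge : ∀ (T : BT) (a s : ℕ), T.inorder = List.range' a s →
    D s ≤ ∑ t ∈ Finset.range s, T.depth (a + t) := by
  intro T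
  induction T with
  | leaf =>
      intro a s h
      have : s = 0 := by
        have := congrArg List.length h
        simpa [BT.inorder] using this.symm
      subst this
      simp [D]
  | node l x r ihl ihr =>
      intro a s h
      obtain ⟨p, q, hl, hx, hr, hs⟩ := inorder_split' h
      subst hs
      rw [show p + q + 1 = p + (q + 1) from by omega, Finset.sum_range_add,
        Finset.sum_range_succ']
      have e1 : ∀ t ∈ Finset.range p, (BT.node l x r).depth (a + t) = l.depth (a + t) + 1 := by
        intro t ht
        simp only [Finset.mem_range] at ht
        exact depth_node_lt (by omega)
      have e2 : ∀ t ∈ Finset.range q, (BT.node l x r).depth (a + (p + (t + 1)))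
          = r.depth (a + p + 1 + t) + 1 := by
        intro t ht
        rw [show a + (p + (t + 1)) = a + p + 1 + t from by omega]
        exact depth_node_gt (by omega)
      have e3 : (BT.node l x r).depth (a + (p + 0)) = 0 := by
        rw [show a + (p + 0) = x from by omega]; exact depth_node_self
      rw [Finset.sum_congr rfl e1, Finset.sum_congr rfl e2, e3]
      have ih1 := ihl a p hl
      have ih2 := ihr (a + p + 1) q hr
      have hD := Dkey p q
      have hDeq : D (p + (q + 1)) = D (p + q + 1) := by
        rw [show p + (q + 1) = p + q + 1 from by omega]
      have s1 : ∑ t ∈ Finset.range p, (l.depth (a + t) + 1)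
          = (∑ t ∈ Finset.range p, l.depth (a + t)) + p := by
        rw [Finset.sum_add_distrib]; simp
      have s2 : ∑ t ∈ Finset.range q, (r.depth (a + p + 1 + t) + 1)
          = (∑ t ∈ Finset.range q, r.depth (a + p + 1 + t)) + q := by
        rw [Finset.sum_add_distrib]; simp
      rw [s1, s2]
      omega

lemma sum_Icc_one {M : Type*} [AddCommMonoid M] (f : ℕ → M) (m : ℕ) :
    ∑ i ∈ Finset.Icc 1 m, f i = ∑ i ∈ Finset.range m, f (1 + i) := by
  rw [← Finset.Ico_add_one_right_eq_Icc, Finset.sum_Ico_eq_sum_range]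
  norm_num

end Aux13

open Aux13 in
/-- For `n, k ≥ 1` and the cyclic sequential search sequence of length
`m = k·n` given by `x_i = ((i−1) mod n) + 1` (with `x_0` the root label of `T`), every
BST `T` on `{1,…,n}` satisfies (a) `R_ℓ(T,X) ≤ 4m` and
(b) `R_r(T,X) ≥ k·∑_{i=1}^{n} ⌊log₂ i⌋`. -/
theorem stmt13 (n k : ℕ) (hn : 1 ≤ n) (hk : 1 ≤ k) (T : BT) (hT : BT.IsBST n T)
    (x : ℕ → ℕ) (hx0 : x 0 = T.rootLabel)
    (hx : ∀ i, 1 ≤ i → i ≤ k * n → x i = (i - 1) % n + 1) :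
    Rlazy T x (k * n) ≤ 4 * ((k : ℤ) * n) ∧
      (k : ℤ) * ∑ i ∈ Finset.Icc 1 n, (Nat.log 2 i : ℤ) ≤ Rroot T x (k * n) := by
  simp only [Rlazy, Rroot]
  obtain ⟨n', rfl⟩ : ∃ n', n = n' + 1 := ⟨n - 1, by omega⟩
  have hT' : T.inorder = List.range' 1 (n' + 1) := hT
  have hxval : ∀ j t, t < n' + 1 → j * (n' + 1) + t + 1 ≤ k * (n' + 1) →
      x (j * (n' + 1) + t + 1) = t + 1 := by
    intro j t ht hle
    rw [hx _ (by omega) hle]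
    congr 1
    rw [show j * (n' + 1) + t + 1 - 1 = t + j * (n' + 1) from by omega,
      Nat.add_mul_mod_self_right, Nat.mod_eq_of_lt ht]
  have hxmul : ∀ j, 1 ≤ j → j ≤ k → x (j * (n' + 1)) = n' + 1 := by
    intro j hj hjk
    have hb : j * (n' + 1) ≤ k * (n' + 1) := Nat.mul_le_mul_right _ hjk
    have h1 : 1 ≤ j * (n' + 1) := by
      calc 1 = 1 * 1 := by norm_num
      _ ≤ j * (n' + 1) := Nat.mul_le_mul hj (by omega)
    rw [hx _ h1 hb]
    obtain ⟨j', rfl⟩ : ∃ j', j = j' + 1 := ⟨j - 1, by omega⟩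
    have e : (j' + 1) * (n' + 1) - 1 = n' + j' * (n' + 1) := by
      have : (j' + 1) * (n' + 1) = j' * (n' + 1) + (n' + 1) := by ring
      omega
    rw [e, Nat.add_mul_mod_self_right, Nat.mod_eq_of_lt (by omega)]
  have hrootd : T.depth (T.rootLabel) = 0 := by
    cases T with
    | leaf =>
        exfalso
        have := congrArg List.length hT'
        simp [BT.inorder] at this
    | node l y r => simp [BT.rootLabel, BT.depth]
  have hps := path_sum T 1 n' (by exact_mod_cast hT')
  constructor
  · -- part (a)
    have key : ∀ j, j ≤ k →
        ∑ i ∈ Finset.range (j * (n' + 1)), T.cost (x (1 + i - 1)) (x (1 + i))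
          ≤ 2 * j * (((n' + 1 : ℕ) : ℤ) - 1) := by
      intro j
      induction j with
      | zero => intro _; simp
      | succ j ihj =>
          intro hjk
          have hple := ihj (by omega)
          rw [show (j + 1) * (n' + 1) = j * (n' + 1) + (n' + 1) from by ring,
            Finset.sum_range_add]
          have hsimp : ∀ t ∈ Finset.range (n' + 1),
              T.cost (x (1 + (j * (n' + 1) + t) - 1)) (x (1 + (j * (n' + 1) + t)))
                = T.cost (x (j * (n' + 1) + t)) (x (j * (n' + 1) + t + 1)) := by
            intro t ht
            rw [show 1 + (j * (n' + 1) + t) - 1 = j * (n' + 1) + t from by omega,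
              show 1 + (j * (n' + 1) + t) = j * (n' + 1) + t + 1 from by omega]
          rw [Finset.sum_congr rfl hsimp, Finset.sum_range_succ']
          have e1 : ∀ t ∈ Finset.range n',
              T.cost (x (j * (n' + 1) + (t + 1))) (x (j * (n' + 1) + (t + 1) + 1))
                = T.cost (1 + t) (1 + t + 1) := by
            intro t ht
            simp only [Finset.mem_range] at ht
            have b1 : j * (n' + 1) + t + 1 ≤ k * (n' + 1) := by
              have : (j + 1) * (n' + 1) ≤ k * (n' + 1) := Nat.mul_le_mul_right _ hjk
              have : (j + 1) * (n' + 1) = j * (n' + 1) + (n' + 1) := by ring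
              omega
            have b2 : j * (n' + 1) + (t + 1) + 1 ≤ k * (n' + 1) := by
              have h3 : (j + 1) * (n' + 1) ≤ k * (n' + 1) := Nat.mul_le_mul_right _ hjk
              have h4 : (j + 1) * (n' + 1) = j * (n' + 1) + (n' + 1) := by ring
              omega
            have v1 : x (j * (n' + 1) + t + 1) = t + 1 := hxval j t (by omega) b1
            have v2 : x (j * (n' + 1) + (t + 1) + 1) = t + 2 := hxval j (t + 1) (by omega) b2
            rw [v2, show j * (n' + 1) + (t + 1) = j * (n' + 1) + t + 1 from by omega, v1]
            rw [show t + 1 = 1 + t from by omega, show t + 2 = 1 + t + 1 from by omega]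
          have e0 : T.cost (x (j * (n' + 1) + 0)) (x (j * (n' + 1) + 0 + 1))
              ≤ (T.depth (n' + 1) : ℤ) + (T.depth 1 : ℤ) := by
            have v1 : x (j * (n' + 1) + 0 + 1) = 1 := by
              have b1 : j * (n' + 1) + 0 + 1 ≤ k * (n' + 1) := by
                have h3 : (j + 1) * (n' + 1) ≤ k * (n' + 1) := Nat.mul_le_mul_right _ hjk
                have h4 : (j + 1) * (n' + 1) = j * (n' + 1) + (n' + 1) := by ring
                omega
              simpa using hxval j 0 (by omega) b1
            rw [v1]
            rcases Nat.eq_zero_or_pos j with hj0 | hjpos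
            · subst hj0
              simp only [Nat.zero_mul, Nat.add_zero, Nat.zero_add]
              rw [hx0]
              calc T.cost T.rootLabel 1 ≤ (T.depth T.rootLabel : ℤ) + T.depth 1 :=
                    cost_le T _ 1
              _ ≤ (T.depth (n' + 1) : ℤ) + T.depth 1 := by
                    rw [hrootd]
                    have h0 : (0 : ℤ) ≤ (T.depth (n' + 1) : ℤ) := Int.natCast_nonneg _
                    push_cast
                    linarith
            · rw [show j * (n' + 1) + 0 = j * (n' + 1) from by omega, hxmul j hjpos (by omega)]
              exact cost_le T _ 1
          rw [Finset.sum_congr rfl e1]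
          have hps' : (∑ t ∈ Finset.range n', T.cost (1 + t) (1 + t + 1))
              + (T.depth 1 : ℤ) + (T.depth (n' + 1) : ℤ) = 2 * n' := by
            have hps2 := hps
            rw [show (1 + n' : ℕ) = n' + 1 from by omega] at hps2
            exact hps2
          push_cast at hps' hple ⊢
          linarith
    have hconv : (∑ i ∈ Finset.Icc 1 (k * (n' + 1)), T.cost (x (i - 1)) (x i))
        = ∑ i ∈ Finset.range (k * (n' + 1)), T.cost (x (1 + i - 1)) (x (1 + i)) :=
      sum_Icc_one (fun i => T.cost (x (i - 1)) (x i)) _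
    rw [hconv]
    have hk' := key k le_rfl
    have hkz : (0 : ℤ) ≤ (k : ℤ) := by positivity
    have hnz : (1 : ℤ) ≤ ((n' + 1 : ℕ) : ℤ) := by push_cast; omega
    nlinarith [hk', hkz, hnz]
  · -- part (b)
    have keyb : ∀ j, j ≤ k →
        (j : ℤ) * (D (n' + 1) : ℤ)
          ≤ ∑ i ∈ Finset.range (j * (n' + 1)), (T.depth (x (1 + i)) : ℤ) := by
      intro j
      induction j with
      | zero => intro _; simp
      | succ j ihj =>
          intro hjk
          have hple := ihj (by omega)
          rw [show (j + 1) * (n' + 1) = j * (n' + 1) + (n' + 1) from by ring,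
            Finset.sum_range_add]
          have e1 : ∀ t ∈ Finset.range (n' + 1),
              (T.depth (x (1 + (j * (n' + 1) + t))) : ℤ) = (T.depth (1 + t) : ℤ) := by
            intro t ht
            simp only [Finset.mem_range] at ht
            have b1 : j * (n' + 1) + t + 1 ≤ k * (n' + 1) := by
              have h3 : (j + 1) * (n' + 1) ≤ k * (n' + 1) := Nat.mul_le_mul_right _ hjk
              have h4 : (j + 1) * (n' + 1) = j * (n' + 1) + (n' + 1) := by ring
              omega
            rw [show 1 + (j * (n' + 1) + t) = j * (n' + 1) + t + 1 from by omega,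
              hxval j t (by omega) b1, show t + 1 = 1 + t from by omega]
          rw [Finset.sum_congr rfl e1]
          have hds := depth_sum_ge T 1 (n' + 1) hT'
          have hds' : (D (n' + 1) : ℤ) ≤ ∑ t ∈ Finset.range (n' + 1), (T.depth (1 + t) : ℤ) := by
            push_cast
            exact_mod_cast hds
          push_cast at hple ⊢
          linarith
    have hconv : (∑ i ∈ Finset.Icc 1 (k * (n' + 1)), (T.depth (x i) : ℤ))
        = ∑ i ∈ Finset.range (k * (n' + 1)), (T.depth (x (1 + i)) : ℤ) :=
      sum_Icc_one (fun i => (T.depth (x i) : ℤ)) _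
    have hDconv : (∑ i ∈ Finset.Icc 1 (n' + 1), (Nat.log 2 i : ℤ)) = (D (n' + 1) : ℤ) := by
      rw [sum_Icc_one (fun i => (Nat.log 2 i : ℤ)) (n' + 1)]
      unfold D
      push_cast
      exact Finset.sum_congr rfl fun i _ => by rw [add_comm]
    rw [hconv, hDconv]
    exact keyb k le_rfl
end

section
/- For every n ≥ 1 and all positive real weights w_1,…,w_n with total weight W = ∑_{k=1}^n w_k, there exists a binary search tree T on keys {1,…,n} such that d_T(j) ≤ log₂(W / w_j) + 2 for every key j. -/
open Finset

noncomputable def splitIdx (w : ℕ → ℝ) (a len : ℕ) : ℕ :=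
  min (sInf {i | ∑ k ∈ Finset.range (len+1), w (a+k) ≤ 2 * ∑ k ∈ Finset.range (i+1), w (a+k)}) len

noncomputable def build (w : ℕ → ℝ) : ℕ → ℕ → BT
  | _, 0 => .leaf
  | a, (len+1) =>
    .node (build w a (splitIdx w a len)) (a + splitIdx w a len)
      (build w (a + splitIdx w a len + 1) (len - splitIdx w a len))
  termination_by a len => len
  decreasing_by
  · exact Nat.lt_succ_of_le (min_le_right _ _)
  · exact Nat.lt_succ_of_le (Nat.sub_le _ _)

theorem build_inorder (w : ℕ → ℝ) (len : ℕ) : ∀ a, (build w a len).inorder = List.range' a len := by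
  induction len using Nat.strong_induction_on with
  | _ len ih =>
    match len with
    | 0 => intro a; simp [build, BT.inorder]
    | len+1 =>
      intro a
      rw [build]
      have hile : splitIdx w a len ≤ len := min_le_right _ _
      simp only [BT.inorder]
      rw [ih _ (Nat.lt_succ_of_le hile) a, ih _ (Nat.lt_succ_of_le (Nat.sub_le _ _)) _]
      have h1 : (a + splitIdx w a len) :: List.range' (a + splitIdx w a len + 1) (len - splitIdx w a len)
          = List.range' (a + splitIdx w a len) (len - splitIdx w a len + 1) := by
        rw [List.range'_succ]
      rw [h1, List.range'_append_1]
      congr 1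
      omega

theorem build_depth (w : ℕ → ℝ) (hw : ∀ k, 0 < w k) (len : ℕ) :
    ∀ a j, a ≤ j → j < a + len →
      w j * 2 ^ ((build w a len).depth j) ≤ ∑ k ∈ Finset.range len, w (a+k) := by
  induction len using Nat.strong_induction_on with
  | _ len ih =>
    match len with
    | 0 => intro a j h1 h2; omega
    | len+1 =>
      intro a j h1 h2
      set S : Set ℕ := {i | ∑ k ∈ Finset.range (len+1), w (a+k) ≤ 2 * ∑ k ∈ Finset.range (i+1), w (a+k)} with hS
      have hV0 : (0:ℝ) ≤ ∑ k ∈ Finset.range (len+1), w (a+k) :=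
        Finset.sum_nonneg fun k _ => (hw _).le
      have hmem : len ∈ S := by simpa [hS] using by linarith
      have hsle : sInf S ≤ len := Nat.sInf_le hmem
      have hsplit : splitIdx w a len = sInf S := min_eq_left hsle
      set i := splitIdx w a len with hidef
      have hile : i ≤ len := min_le_right _ _
      have hiS : i ∈ S := hsplit ▸ Nat.sInf_mem ⟨len, hmem⟩
      have hiS' : ∑ k ∈ Finset.range (len+1), w (a+k) ≤ 2 * ∑ k ∈ Finset.range (i+1), w (a+k) := hiS
      rw [build, ← hidef]
      rcases lt_trichotomy j (a + i) with hlt | heq | hgt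
      · -- left subtree
        have hi1 : 1 ≤ i := by omega
        have hmin : ¬ ((i-1) ∈ S) := Nat.notMem_of_lt_sInf (by omega : i - 1 < sInf S)
        have hmin' : 2 * ∑ k ∈ Finset.range i, w (a+k) < ∑ k ∈ Finset.range (len+1), w (a+k) := by
          have : ¬ (∑ k ∈ Finset.range (len+1), w (a+k) ≤ 2 * ∑ k ∈ Finset.range ((i-1)+1), w (a+k)) := hmin
          rw [show i - 1 + 1 = i by omega] at this
          linarith [not_le.mp this]
        have hIH := ih i (by omega) a j h1 hlt
        simp only [BT.depth, if_neg (by omega : ¬ j = a + i), if_pos hlt]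
        rw [pow_succ]
        nlinarith [pow_pos (by norm_num : (0:ℝ) < 2) ((build w a i).depth j), (hw j).le]
      · -- root
        simp only [BT.depth, if_pos heq, pow_zero, mul_one]
        calc w j = w (a + i) := by rw [heq]
          _ ≤ ∑ k ∈ Finset.range (len+1), w (a+k) :=
            Finset.single_le_sum (f := fun k => w (a+k)) (fun k _ => (hw _).le)
              (Finset.mem_range.mpr (by omega))
      · -- right subtree
        have hIH := ih (len - i) (by omega) (a+i+1) j (by omega) (by omega)
        have hsum : ∑ k ∈ Finset.range (len+1), w (a+k)
            = (∑ k ∈ Finset.range (i+1), w (a+k)) + ∑ k ∈ Finset.range (len-i), w (a+i+1+k) := by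
          rw [show len + 1 = (i+1) + (len - i) by omega, Finset.sum_range_add]
          congr 1
          apply Finset.sum_congr rfl
          intro k _
          congr 1
          omega
        simp only [BT.depth, if_neg (by omega : ¬ j = a + i), if_neg (by omega : ¬ j < a + i)]
        rw [pow_succ]
        nlinarith [pow_pos (by norm_num : (0:ℝ) < 2) ((build w (a+i+1) (len-i)).depth j), (hw j).le]


/-- For every `n ≥ 1` and all positive weights `w_1,…,w_n` with total
weight `W = ∑_{k=1}^n w_k`, there exists a BST `T` on `{1,…,n}` such that
`d_T(j) ≤ log₂(W / w_j) + 2` for every key `j`. -/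
theorem stmt16 (n : ℕ) (hn : 1 ≤ n) (w : ℕ → ℝ) (hw : ∀ k ∈ Finset.Icc 1 n, 0 < w k) :
    ∃ T : BT, BT.IsBST n T ∧
      ∀ j ∈ Finset.Icc 1 n,
        (T.depth j : ℝ) ≤ Real.logb 2 ((∑ k ∈ Finset.Icc 1 n, w k) / w j) + 2 := by
  set w' : ℕ → ℝ := fun k => if k ∈ Finset.Icc 1 n then w k else 1 with hw'def
  have hw' : ∀ k, 0 < w' k := by
    intro k
    simp only [hw'def]
    split
    · exact hw k (by assumption)
    · norm_num
  refine ⟨build w' 1 n, build_inorder w' n 1, ?_⟩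
  intro j hj
  have hj' := Finset.mem_Icc.mp hj
  have hd := build_depth w' hw' n 1 j hj'.1 (by omega)
  have hsum : ∑ k ∈ Finset.range n, w' (1+k) = ∑ k ∈ Finset.Icc 1 n, w k := by
    rw [← Finset.Ico_add_one_right_eq_Icc, Finset.sum_Ico_eq_sum_range]
    apply Finset.sum_congr (by congr 1)
    intro k hk
    have hk' := Finset.mem_range.mp hk
    simp only [hw'def]
    rw [if_pos (Finset.mem_Icc.mpr ⟨by omega, by omega⟩)]
  have hwj : w' j = w j := by simp only [hw'def]; rw [if_pos hj]
  rw [hsum, hwj] at hd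
  set W := ∑ k ∈ Finset.Icc 1 n, w k with hW
  have hwj0 : 0 < w j := hw j hj
  set d := (build w' 1 n).depth j with hd'
  have h2 : (2:ℝ) ^ d ≤ W / w j := by
    rw [le_div_iff₀ hwj0]
    linarith [mul_comm (w j) ((2:ℝ)^d)]
  have hlog : (d : ℝ) ≤ Real.logb 2 (W / w j) := by
    have := Real.logb_le_logb_of_le (by norm_num : (1:ℝ) < 2) (pow_pos (by norm_num : (0:ℝ) < 2) d) h2
    rwa [Real.logb_pow, Real.logb_self_eq_one (by norm_num), mul_one] at this
  linarith
end
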